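/- arXiv:2304.00337 — 2 statements merged into one kernel-verified Lean document; each statement's English description precedes it below -/
import Mathlib

section
/- Let Ω = [0,a]×[0,b] with a,b > 0, k ∈ ℝ², ψ ∈ C¹(Ω) satisfying ψ(x₁,b) = exp(i k₂ b) ψ(x₁,0) for all x₁ ∈ [0,a] and ψ(a,x₂) = exp(i k₁ a) ψ(0,x₂) for all x₂ ∈ [0,b], and v ∈ C¹(Ω,ℂ²) satisfying v₁(x₁,b) = exp(i k₂ b) v₁(x₁,0) and v₂(a,x₂) = exp(i k₁ a) v₂(0,x₂). Then ∫_Ω ⟨v(x), vcurl ψ(x)⟩ dx = ∫_Ω (scurl v̄)(x) ψ(x) dx, i.e., partial integration holds without boundary terms. -/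
open Complex MeasureTheory

/-- Partial derivative with respect to the first variable of `f : ℝ × ℝ → ℂ`. -/
noncomputable def pd1 (f : ℝ × ℝ → ℂ) (x : ℝ × ℝ) : ℂ :=
  deriv (fun t => f (t, x.2)) x.1

/-- Partial derivative with respect to the second variable. -/
noncomputable def pd2 (f : ℝ × ℝ → ℂ) (x : ℝ × ℝ) : ℂ :=
  deriv (fun t => f (x.1, t)) x.2

/-- partial integration without boundary terms on
`Ω = [0,a] × [0,b]` under Bloch boundary conditions:
`∫_Ω ⟨v, vcurl ψ⟩ = ∫_Ω (scurl v̄) ψ`, where `vcurl ψ = (−∂₂ψ, ∂₁ψ)`,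
`scurl v̄ = ∂₂ v̄₁ − ∂₁ v̄₂`, and `⟨v,w⟩ = v̄₁w₁ + v̄₂w₂`. -/
theorem stmt_0 (a b : ℝ) (ha : 0 < a) (hb : 0 < b) (k1 k2 : ℝ)
    (ψ v1 v2 : ℝ × ℝ → ℂ)
    (hψ : ContDiffOn ℝ 1 ψ (Set.Icc ((0 : ℝ), (0 : ℝ)) (a, b)))
    (hv1 : ContDiffOn ℝ 1 v1 (Set.Icc ((0 : ℝ), (0 : ℝ)) (a, b)))
    (hv2 : ContDiffOn ℝ 1 v2 (Set.Icc ((0 : ℝ), (0 : ℝ)) (a, b)))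
    (hψb1 : ∀ x1 ∈ Set.Icc 0 a,
      ψ (x1, b) = Complex.exp (Complex.I * k2 * b) * ψ (x1, 0))
    (hψb2 : ∀ x2 ∈ Set.Icc 0 b,
      ψ (a, x2) = Complex.exp (Complex.I * k1 * a) * ψ (0, x2))
    (hvb1 : ∀ x1 ∈ Set.Icc 0 a,
      v1 (x1, b) = Complex.exp (Complex.I * k2 * b) * v1 (x1, 0))
    (hvb2 : ∀ x2 ∈ Set.Icc 0 b,
      v2 (a, x2) = Complex.exp (Complex.I * k1 * a) * v2 (0, x2)) :
    ∫ x in Set.Icc ((0 : ℝ), (0 : ℝ)) (a, b),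
        (starRingEnd ℂ (v1 x) * (-(pd2 ψ x)) + starRingEnd ℂ (v2 x) * pd1 ψ x)
      = ∫ x in Set.Icc ((0 : ℝ), (0 : ℝ)) (a, b),
        (pd2 (fun y => starRingEnd ℂ (v1 y)) x
          - pd1 (fun y => starRingEnd ℂ (v2 y)) x) * ψ x := by
  
  set S : Set (ℝ × ℝ) := Set.Icc ((0 : ℝ), (0 : ℝ)) (a, b) with hS
  -- conjugated functions
  set cv1 : ℝ × ℝ → ℂ := fun y => starRingEnd ℂ (v1 y) with hcv1
  set cv2 : ℝ × ℝ → ℂ := fun y => starRingEnd ℂ (v2 y) with hcv2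
  have hcv1d : ContDiffOn ℝ 1 cv1 S := Complex.conjCLE.contDiff.comp_contDiffOn hv1
  have hcv2d : ContDiffOn ℝ 1 cv2 S := Complex.conjCLE.contDiff.comp_contDiffOn hv2
  -- basic facts about S
  have hSprod : S = Set.Icc (0:ℝ) a ×ˢ Set.Icc (0:ℝ) b := Set.Icc_prod_eq _ _
  have hintS : interior S = Set.Ioo (0:ℝ) a ×ˢ Set.Ioo (0:ℝ) b := by
    rw [hSprod, interior_prod_eq, interior_Icc, interior_Icc]
  have hud : UniqueDiffOn ℝ S := by
    rw [hSprod]; exact (uniqueDiffOn_Icc ha).prod (uniqueDiffOn_Icc hb)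
  have hconv : Convex ℝ S := convex_Icc _ _
  have hcomp : IsCompact S := isCompact_Icc
  have hfront : volume (S \ interior S) = 0 := by
    have hsub : S \ interior S ⊆ frontier S := fun x hx => ⟨subset_closure hx.1, hx.2⟩
    exact measure_mono_null hsub (hconv.addHaar_frontier volume)
  have hmemae : ∀ᵐ x ∂(volume.restrict S), x ∈ interior S := by
    rw [ae_iff]
    rw [Measure.restrict_apply' measurableSet_Icc]
    have hsub2 : {x : ℝ × ℝ | ¬ x ∈ interior S} ∩ S ⊆ S \ interior S :=
      fun x hx => ⟨hx.2, hx.1⟩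
    exact measure_mono_null hsub2 hfront
  -- differentiability at interior points
  have hdiff : ∀ (f : ℝ × ℝ → ℂ), ContDiffOn ℝ 1 f S → ∀ x ∈ interior S,
      DifferentiableAt ℝ f x := fun f hf x hx =>
    ((hf.mono interior_subset).differentiableOn one_ne_zero).differentiableAt
      (isOpen_interior.mem_nhds hx)
  -- relate pd1/pd2 with fderiv at interior points
  have hpd1 : ∀ (f : ℝ × ℝ → ℂ) (x : ℝ × ℝ), DifferentiableAt ℝ f x →
      pd1 f x = fderiv ℝ f x (1, 0) := by
    intro f x hf
    have : HasDerivAt (fun t => f (t, x.2)) (fderiv ℝ f x (1, 0)) x.1 := by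
      have h1 : HasDerivAt (fun t : ℝ => (t, x.2)) ((1 : ℝ), (0 : ℝ)) x.1 :=
        (hasDerivAt_id x.1).prodMk (hasDerivAt_const _ _)
      exact hf.hasFDerivAt.comp_hasDerivAt x.1 h1
    exact this.deriv
  have hpd2 : ∀ (f : ℝ × ℝ → ℂ) (x : ℝ × ℝ), DifferentiableAt ℝ f x →
      pd2 f x = fderiv ℝ f x (0, 1) := by
    intro f x hf
    have : HasDerivAt (fun t => f (x.1, t)) (fderiv ℝ f x (0, 1)) x.2 := by
      have h1 : HasDerivAt (fun t : ℝ => (x.1, t)) ((0 : ℝ), (1 : ℝ)) x.2 :=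
        (hasDerivAt_const _ _).prodMk (hasDerivAt_id x.2)
      exact hf.hasFDerivAt.comp_hasDerivAt x.2 h1
    exact this.deriv
  -- the two product functions
  set F : ℝ × ℝ → ℂ := fun x => cv2 x * ψ x with hF
  set G : ℝ × ℝ → ℂ := fun x => -(cv1 x * ψ x) with hG
  have hFd : ContDiffOn ℝ 1 F S := hcv2d.mul hψ
  have hGd : ContDiffOn ℝ 1 G S := (hcv1d.mul hψ).neg
  -- continuous versions of integrands using fderivWithin
  have hcontfd : ∀ (f : ℝ × ℝ → ℂ), ContDiffOn ℝ 1 f S → ∀ v : ℝ × ℝ,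
      ContinuousOn (fun x => fderivWithin ℝ f S x v) S := by
    intro f hf v
    exact (hf.continuousOn_fderivWithin hud le_rfl).clm_apply continuousOn_const
  have hfdeq : ∀ (f : ℝ × ℝ → ℂ), ContDiffOn ℝ 1 f S → ∀ x ∈ interior S,
      fderivWithin ℝ f S x = fderiv ℝ f x := by
    intro f hf x hx
    exact (hdiff f hf x hx).fderivWithin (hud x (interior_subset hx))
  -- integrability of the two original integrands
  have hInt1 : IntegrableOn
      (fun x => cv1 x * (-(pd2 ψ x)) + cv2 x * pd1 ψ x) S := by
    have hcont : ContinuousOn (fun x => cv1 x * (-(fderivWithin ℝ ψ S x (0,1)))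
        + cv2 x * fderivWithin ℝ ψ S x (1,0)) S :=
      ((hcv1d.continuousOn.mul (hcontfd ψ hψ (0,1)).neg).add
        (hcv2d.continuousOn.mul (hcontfd ψ hψ (1,0))))
    refine (hcont.integrableOn_compact hcomp).congr ?_
    filter_upwards [hmemae] with x hx
    rw [hfdeq ψ hψ x hx, ← hpd1 ψ x (hdiff ψ hψ x hx), ← hpd2 ψ x (hdiff ψ hψ x hx)]
  have hInt2 : IntegrableOn
      (fun x => (pd2 cv1 x - pd1 cv2 x) * ψ x) S := by
    have hcont : ContinuousOn (fun x => (fderivWithin ℝ cv1 S x (0,1)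
        - fderivWithin ℝ cv2 S x (1,0)) * ψ x) S :=
      ((hcontfd cv1 hcv1d (0,1)).sub (hcontfd cv2 hcv2d (1,0))).mul hψ.continuousOn
    refine (hcont.integrableOn_compact hcomp).congr ?_
    filter_upwards [hmemae] with x hx
    rw [hfdeq cv1 hcv1d x hx, hfdeq cv2 hcv2d x hx,
      ← hpd1 cv2 x (hdiff cv2 hcv2d x hx), ← hpd2 cv1 x (hdiff cv1 hcv1d x hx)]
  -- divergence integrand equality a.e.
  rw [← sub_eq_zero, ← integral_sub hInt1 hInt2]
  have hdivae : (fun x => cv1 x * (-(pd2 ψ x)) + cv2 x * pd1 ψ x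
      - (pd2 cv1 x - pd1 cv2 x) * ψ x)
      =ᵐ[volume.restrict S]
      (fun x => fderiv ℝ F x (1, 0) + fderiv ℝ G x (0, 1)) := by
    filter_upwards [hmemae] with x hx
    have hψx := hdiff ψ hψ x hx
    have h1 := hdiff cv1 hcv1d x hx
    have h2 := hdiff cv2 hcv2d x hx
    have hFder : fderiv ℝ F x = cv2 x • fderiv ℝ ψ x + ψ x • fderiv ℝ cv2 x :=
      fderiv_mul h2 hψx
    have hGder : fderiv ℝ G x = -(cv1 x • fderiv ℝ ψ x + ψ x • fderiv ℝ cv1 x) := by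
      rw [hG]
      rw [fderiv_fun_neg, fderiv_fun_mul h1 hψx]
    rw [hFder, hGder, hpd1 ψ x hψx, hpd2 ψ x hψx, hpd1 cv2 x h2, hpd2 cv1 x h1]
    simp only [ContinuousLinearMap.add_apply, ContinuousLinearMap.smul_apply,
      ContinuousLinearMap.neg_apply, smul_eq_mul]
    ring
  rw [integral_congr_ae hdivae]
  -- apply the divergence theorem
  have hdivInt : IntegrableOn (fun x => fderiv ℝ F x (1, 0) + fderiv ℝ G x (0, 1)) S := by
    refine (hInt1.sub hInt2).congr ?_
    exact hdivae
  have hdf : ∀ x ∈ Set.Ioo (0:ℝ) a ×ˢ Set.Ioo (0:ℝ) b \ (∅ : Set (ℝ × ℝ)),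
      HasFDerivAt F (fderiv ℝ F x) x := by
    intro x hx
    exact (hdiff F hFd x (hintS ▸ hx.1)).hasFDerivAt
  have hdg : ∀ x ∈ Set.Ioo (0:ℝ) a ×ˢ Set.Ioo (0:ℝ) b \ (∅ : Set (ℝ × ℝ)),
      HasFDerivAt G (fderiv ℝ G x) x := by
    intro x hx
    exact (hdiff G hGd x (hintS ▸ hx.1)).hasFDerivAt
  have key := integral_divergence_prod_Icc_of_hasFDerivAt_off_countable_of_le
    F G (fun x => fderiv ℝ F x) (fun x => fderiv ℝ G x) ((0:ℝ), (0:ℝ)) (a, b)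
    ⟨ha.le, hb.le⟩ ∅ Set.countable_empty hFd.continuousOn hGd.continuousOn hdf hdg hdivInt
  rw [key]
  -- boundary terms vanish
  have hexp2 : starRingEnd ℂ (Complex.exp (Complex.I * k2 * b)) *
      Complex.exp (Complex.I * k2 * b) = 1 := by
    rw [← Complex.exp_conj, ← Complex.exp_add]
    simp only [map_mul, Complex.conj_I, Complex.conj_ofReal]
    ring_nf
    exact Complex.exp_zero
  have hexp1 : starRingEnd ℂ (Complex.exp (Complex.I * k1 * a)) *
      Complex.exp (Complex.I * k1 * a) = 1 := by
    rw [← Complex.exp_conj, ← Complex.exp_add]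
    simp only [map_mul, Complex.conj_I, Complex.conj_ofReal]
    ring_nf
    exact Complex.exp_zero
  have hGb : ∀ x1 ∈ Set.uIcc (0:ℝ) a, G (x1, b) = G (x1, 0) := by
    intro x1 hx1
    rw [Set.uIcc_of_le ha.le] at hx1
    simp only [hG, hcv1]
    rw [hvb1 x1 hx1, hψb1 x1 hx1, map_mul]
    rw [show starRingEnd ℂ (Complex.exp (Complex.I * k2 * b)) * starRingEnd ℂ (v1 (x1,0)) *
      (Complex.exp (Complex.I * k2 * b) * ψ (x1, 0)) =
      (starRingEnd ℂ (Complex.exp (Complex.I * k2 * b)) * Complex.exp (Complex.I * k2 * b)) *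
      (starRingEnd ℂ (v1 (x1,0)) * ψ (x1, 0)) by ring, hexp2, one_mul]
  have hFb : ∀ x2 ∈ Set.uIcc (0:ℝ) b, F (a, x2) = F (0, x2) := by
    intro x2 hx2
    rw [Set.uIcc_of_le hb.le] at hx2
    simp only [hF, hcv2]
    rw [hvb2 x2 hx2, hψb2 x2 hx2, map_mul]
    rw [show starRingEnd ℂ (Complex.exp (Complex.I * k1 * a)) * starRingEnd ℂ (v2 (0,x2)) *
      (Complex.exp (Complex.I * k1 * a) * ψ (0, x2)) =
      (starRingEnd ℂ (Complex.exp (Complex.I * k1 * a)) * Complex.exp (Complex.I * k1 * a)) *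
      (starRingEnd ℂ (v2 (0,x2)) * ψ (0, x2)) by ring, hexp1, one_mul]
  have e1 : (∫ x in (0:ℝ)..a, G (x, b)) = ∫ x in (0:ℝ)..a, G (x, 0) :=
    intervalIntegral.integral_congr fun x hx => hGb x hx
  have e2 : (∫ y in (0:ℝ)..b, F (a, y)) = ∫ y in (0:ℝ)..b, F (0, y) :=
    intervalIntegral.integral_congr fun y hy => hFb y hy
  rw [e1, e2]
  ring
end

section
/- Let A be Hermitian positive semidefinite with null space N(A), let M be Hermitian positive definite, and suppose the columns of L span N(A). If u ∈ ℂⁿ satisfies L* M u = 0 and u ≠ 0, then the generalized Rayleigh quotient ⟨u, Au⟩/⟨u, Mu⟩ is at least the smallest non-zero generalized eigenvalue of (A, M). -/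
open Matrix ComplexOrder

private lemma key_dot {k l : Type*} [Fintype k] [Fintype l] {n : Type*} [Fintype n]
    (P : Matrix n k ℂ) (Q : Matrix n l ℂ) (a : k → ℂ) (b : l → ℂ) :
    star (P *ᵥ a) ⬝ᵥ (Q *ᵥ b) = star a ⬝ᵥ ((Pᴴ * Q) *ᵥ b) := by
  rw [Matrix.star_mulVec, Matrix.dotProduct_mulVec, Matrix.vecMul_vecMul,
    ← Matrix.dotProduct_mulVec]

/-- if `u` is M-orthogonal to the null space of `A` (spanned by
the columns of `L`), then the generalized Rayleigh quotient of `u` is at least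
the smallest non-zero generalized eigenvalue of `(A, M)`. -/
theorem stmt_13 (n m : ℕ) (A M : Matrix (Fin n) (Fin n) ℂ)
    (L : Matrix (Fin n) (Fin m) ℂ)
    (hA : A.PosSemidef) (hM : M.PosDef)
    (hL : ∀ x : Fin n → ℂ, A.mulVec x = 0 ↔ ∃ y : Fin m → ℂ, x = L.mulVec y)
    (u : Fin n → ℂ) (hu : u ≠ 0) (horth : (Lᴴ * M).mulVec u = 0)
    (μ : ℝ)
    (hμ : IsLeast {lam : ℝ | 0 < lam ∧
        ∃ e : Fin n → ℂ, e ≠ 0 ∧ A.mulVec e = (lam : ℂ) • M.mulVec e} μ) :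
    μ ≤ (star u ⬝ᵥ A.mulVec u).re / (star u ⬝ᵥ M.mulVec u).re := by
  classical
  open MatrixOrder in set B := CFC.sqrt M with hBdef
  have hB : B.PosSemidef := by open MatrixOrder in exact (CFC.sqrt_nonneg M).posSemidef
  have hBH : Bᴴ = B := hB.1
  have hBB : B * B = M := by open MatrixOrder in exact CFC.sqrt_mul_sqrt_self M hM.posSemidef.nonneg
  have hdet : IsUnit B.det := by
    have hMdet : M.det ≠ 0 := hM.det_pos.ne'
    have h2 : B.det * B.det = M.det := by rw [← det_mul, hBB]
    have hBdet : B.det ≠ 0 := by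
      intro h; rw [h, mul_zero] at h2; exact hMdet h2.symm
    exact hBdet.isUnit
  have hBi : B * B⁻¹ = 1 := Matrix.mul_nonsing_inv B hdet
  have hiB : B⁻¹ * B = 1 := Matrix.nonsing_inv_mul B hdet
  have hBiH : (B⁻¹)ᴴ = B⁻¹ := by rw [Matrix.conjTranspose_nonsing_inv, hBH]
  set C := B⁻¹ * A * B⁻¹ with hCdef
  have hBC : B * C = A * B⁻¹ := by
    rw [hCdef, ← Matrix.mul_assoc, ← Matrix.mul_assoc, hBi, Matrix.one_mul]
  have hBCB : B * C * B = A := by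
    rw [hBC, Matrix.mul_assoc, hiB, Matrix.mul_one]
  have hCpsd : C.PosSemidef := by
    have h3 := hA.conjTranspose_mul_mul_same B⁻¹
    rwa [hBiH] at h3
  have hC : C.IsHermitian := hCpsd.1
  set v := B *ᵥ u with hvdef
  have hBiv : B⁻¹ *ᵥ v = u := by
    rw [hvdef, Matrix.mulVec_mulVec, hiB, Matrix.one_mulVec]
  have hv : v ≠ 0 := by
    intro h; apply hu; rw [← hBiv, h, Matrix.mulVec_zero]
  have orth : ∀ x : Fin n → ℂ, C *ᵥ x = 0 → star x ⬝ᵥ v = 0 := by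
    intro x hx
    have hAx : A *ᵥ (B⁻¹ *ᵥ x) = 0 := by
      have h1 : B *ᵥ (C *ᵥ x) = 0 := by rw [hx, Matrix.mulVec_zero]
      rwa [Matrix.mulVec_mulVec, hBC, ← Matrix.mulVec_mulVec] at h1
    obtain ⟨y, hy⟩ := (hL _).mp hAx
    have hxBLy : x = B *ᵥ (L *ᵥ y) := by
      rw [← hy, Matrix.mulVec_mulVec, hBi, Matrix.one_mulVec]
    rw [hxBLy, hvdef, key_dot, hBH, hBB, key_dot, horth, dotProduct_zero]
  set U : Matrix (Fin n) (Fin n) ℂ := (hC.eigenvectorUnitary : Matrix (Fin n) (Fin n) ℂ)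
    with hUdef
  set Dg : Matrix (Fin n) (Fin n) ℂ :=
    diagonal (RCLike.ofReal ∘ hC.eigenvalues) with hDgdef
  have hspec : C = U * Dg * star U := hC.spectral_theorem
  have hUU : U * star U = 1 := Matrix.mem_unitaryGroup_iff.mp hC.eigenvectorUnitary.2
  set w : Fin n → ℂ := star U *ᵥ v with hwdef
  have hUH : (star U)ᴴ = U := by
    simp [Matrix.star_eq_conjTranspose, Matrix.conjTranspose_conjTranspose]
  have hquad : star u ⬝ᵥ A *ᵥ u = star w ⬝ᵥ Dg *ᵥ w := by
    rw [hwdef, key_dot, hUH, Matrix.mulVec_mulVec, ← hspec, hvdef, key_dot, hBH,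
      Matrix.mulVec_mulVec, hBCB]
  have hnorm : star u ⬝ᵥ M *ᵥ u = star w ⬝ᵥ w := by
    rw [hwdef, key_dot, hUH, hUU, Matrix.one_mulVec, hvdef, key_dot, hBH, hBB]
  -- eigenvector facts
  have hwi : ∀ i, w i = star (⇑(hC.eigenvectorBasis i)) ⬝ᵥ v := by
    intro i
    simp [hwdef, Matrix.mulVec, dotProduct, Matrix.star_apply, hUdef,
      Matrix.IsHermitian.eigenvectorUnitary_apply]
  have heig : ∀ i, C *ᵥ ⇑(hC.eigenvectorBasis i)
      = hC.eigenvalues i • ⇑(hC.eigenvectorBasis i) := hC.mulVec_eigenvectorBasis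
  have hzero : ∀ i, hC.eigenvalues i = 0 → w i = 0 := by
    intro i h0
    rw [hwi]
    apply orth
    rw [heig i, h0, zero_smul]
  have hge : ∀ i, hC.eigenvalues i ≠ 0 → μ ≤ hC.eigenvalues i := by
    intro i hne
    have hpos : 0 < hC.eigenvalues i :=
      lt_of_le_of_ne (hCpsd.eigenvalues_nonneg i) (Ne.symm hne)
    apply hμ.2
    refine ⟨hpos, B⁻¹ *ᵥ ⇑(hC.eigenvectorBasis i), ?_, ?_⟩
    · intro h
      have h5 : (⇑(hC.eigenvectorBasis i) : Fin n → ℂ) = 0 := by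
        have h6 : B *ᵥ (B⁻¹ *ᵥ ⇑(hC.eigenvectorBasis i)) = 0 := by
          rw [h, Matrix.mulVec_zero]
        rwa [Matrix.mulVec_mulVec, hBi, Matrix.one_mulVec] at h6
      exact (hC.eigenvectorBasis.orthonormal.ne_zero i) (by ext j; exact congrFun h5 j)
    · have h1 : A *ᵥ (B⁻¹ *ᵥ ⇑(hC.eigenvectorBasis i))
          = hC.eigenvalues i • (B *ᵥ ⇑(hC.eigenvectorBasis i)) := by
        rw [Matrix.mulVec_mulVec, ← hBC, ← Matrix.mulVec_mulVec, heig,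
          Matrix.mulVec_smul]
      have h2 : M *ᵥ (B⁻¹ *ᵥ ⇑(hC.eigenvectorBasis i))
          = B *ᵥ ⇑(hC.eigenvectorBasis i) := by
        rw [Matrix.mulVec_mulVec, ← hBB, Matrix.mul_assoc, hBi, Matrix.mul_one]
      rw [h1, h2]
      ext j
      simp [Complex.real_smul]
  -- sums
  have hre1 : (star w ⬝ᵥ Dg *ᵥ w).re
      = ∑ i, hC.eigenvalues i * Complex.normSq (w i) := by
    have hterm : ∀ i : Fin n, star w i * (Dg *ᵥ w) i
        = ((hC.eigenvalues i * Complex.normSq (w i) : ℝ) : ℂ) := by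
      intro i
      have hDgw : (Dg *ᵥ w) i = (hC.eigenvalues i : ℂ) * w i := by
        simp [hDgdef, Matrix.mulVec_diagonal]
      rw [hDgw, Pi.star_apply, RCLike.star_def]
      push_cast
      calc (starRingEnd ℂ) (w i) * ((hC.eigenvalues i : ℂ) * w i)
          = (hC.eigenvalues i : ℂ) * (w i * (starRingEnd ℂ) (w i)) := by ring
        _ = _ := by rw [Complex.mul_conj]
    rw [dotProduct]
    simp only [hterm]
    rw [Complex.re_sum]
    simp
  have hre2 : (star w ⬝ᵥ w).re = ∑ i, Complex.normSq (w i) := by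
    rw [dotProduct, Complex.re_sum]
    refine Finset.sum_congr rfl fun i _ => ?_
    rw [Pi.star_apply, RCLike.star_def, mul_comm, Complex.mul_conj, Complex.ofReal_re]
  have hD : 0 < (star u ⬝ᵥ M *ᵥ u).re := by
    have h := hM.dotProduct_mulVec_pos hu
    have := (Complex.lt_def.mp h).1
    simpa using this
  rw [le_div_iff₀ hD, hquad, hnorm, hre1, hre2, Finset.mul_sum]
  apply Finset.sum_le_sum
  intro i _
  by_cases h0 : hC.eigenvalues i = 0
  · rw [hzero i h0, h0]; simp
  · exact mul_le_mul_of_nonneg_right (hge i h0) (Complex.normSq_nonneg _)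
end
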